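/- Assume ζ = 0, so f₁(0) = ⋯ = f_s(0) = 0, and let N be the nilindex of Q₀. A polynomial differential operator Λ = Σ_{|α| ≤ N} λ_α d^α of degree at most N satisfies Λ^0[g] = 0 for every g in the ideal ⟨f₁,…,f_s⟩ (equivalently, Λ ∈ 𝒟₀) if and only if Λ^0[x^β f_i] = 0 for all i = 1,…,s and all monomials x^β with |β| ≤ N − 1. -/

import Mathlib

open MvPolynomial

/-- Total degree of a multi-exponent. -/
def multideg {n : ℕ} (α : Fin n →₀ ℕ) : ℕ := α.sum fun _ k => k

/-- Normalized derivative `d^α g = (1/α!) ∂^α g` as a polynomial. -/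
noncomputable def nderiv {n : ℕ} (α : Fin n →₀ ℕ) (g : MvPolynomial (Fin n) ℝ) :
    MvPolynomial (Fin n) ℝ :=
  ∑ γ ∈ g.support,
    monomial (γ - α) (((∏ i, (γ i).choose (α i) : ℕ) : ℝ) * coeff γ g)

/-- `Λ(∂_x)[g]`: apply the differential operator with coefficients `Λ`
(in the normalized basis `d^α`), keeping a polynomial result. -/
noncomputable def applyPoly {n : ℕ} (Λ : (Fin n →₀ ℕ) →₀ ℝ)
    (g : MvPolynomial (Fin n) ℝ) : MvPolynomial (Fin n) ℝ :=
  Λ.sum fun α c => c • nderiv α g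

/-- `Λ ↦ Λ^ζ[g]`, as a linear map in `Λ`. -/
noncomputable def applyAtL {n : ℕ} (ζ : Fin n → ℝ) (g : MvPolynomial (Fin n) ℝ) :
    ((Fin n →₀ ℕ) →₀ ℝ) →ₗ[ℝ] ℝ :=
  Finsupp.linearCombination ℝ (fun α => eval ζ (nderiv α g))

/-- `Λ^ζ[g]`. -/
noncomputable def applyAt {n : ℕ} (ζ : Fin n → ℝ) (Λ : (Fin n →₀ ℕ) →₀ ℝ)
    (g : MvPolynomial (Fin n) ℝ) : ℝ := applyAtL ζ g Λ

/-- The orthogonal (dual space) of an ideal at ζ. -/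
noncomputable def dualSpace {n : ℕ} (ζ : Fin n → ℝ)
    (Q : Ideal (MvPolynomial (Fin n) ℝ)) : Submodule ℝ ((Fin n →₀ ℕ) →₀ ℝ) :=
  ⨅ p ∈ Q, LinearMap.ker (applyAtL ζ p)

/-- The maximal ideal at ζ. -/
noncomputable def maxIdealAt {n : ℕ} (ζ : Fin n → ℝ) : Ideal (MvPolynomial (Fin n) ℝ) :=
  Ideal.span (Set.range fun i => X i - C (ζ i))

/-- `Q` is the primary component of `I` at an isolated root `ζ`. -/
def IsPrimaryComponentAt {n : ℕ} (ζ : Fin n → ℝ)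
    (I Q : Ideal (MvPolynomial (Fin n) ℝ)) : Prop :=
  Q.IsPrimary ∧ Q.radical = maxIdealAt ζ ∧
    ∃ S : Finset (Ideal (MvPolynomial (Fin n) ℝ)),
      (∀ P ∈ S, P.IsPrimary ∧ ¬ P.radical ≤ maxIdealAt ζ) ∧ I = S.inf id ⊓ Q

/-- Elements of the dual space of degree at most `t`. -/
noncomputable def dualSpaceLE {n : ℕ} (ζ : Fin n → ℝ)
    (Q : Ideal (MvPolynomial (Fin n) ℝ)) (t : ℕ) :
    Submodule ℝ ((Fin n →₀ ℕ) →₀ ℝ) :=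
  dualSpace ζ Q ⊓ Finsupp.supported ℝ ℝ {α | multideg α ≤ t}

/-- The derivation `∂/∂∂_i` in the normalized coordinates: shift of coefficients. -/
noncomputable def dshift {n : ℕ} (i : Fin n) (Λ : (Fin n →₀ ℕ) →₀ ℝ) :
    (Fin n →₀ ℕ) →₀ ℝ :=
  Finsupp.comapDomain (fun β => β + Finsupp.single i 1) Λ
    (fun _ _ _ _ h => add_right_cancel h)

/-- Truncation: set `∂_j = 0` for `j > k`. -/
noncomputable def trunck {n : ℕ} (k : Fin n) (Λ : (Fin n →₀ ℕ) →₀ ℝ) :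
    (Fin n →₀ ℕ) →₀ ℝ :=
  Λ.filter (fun α => ∀ j, k < j → α j = 0)

/-- Integration with respect to `∂_k` in the normalized coordinates. -/
noncomputable def intk {n : ℕ} (k : Fin n) (Λ : (Fin n →₀ ℕ) →₀ ℝ) :
    (Fin n →₀ ℕ) →₀ ℝ :=
  Finsupp.mapDomain (fun α => α + Finsupp.single k 1) Λ

/-!
At `ζ = 0` the operator acts by `Λ^0[g] = ∑ λ_α · coeff_α g`, so an operator of degree at most
`N` kills `𝔪^(N+1)`, where `𝔪 = ⟨x₁, …, xₙ⟩`. As a vector space, `⟨f⟩` is spanned by the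
products `x^β f_i`, and those with `|β| ≥ N` already lie in `𝔪^(N+1)`; this gives the first
equivalence. For the second, since `𝔪` is prime and no other primary component lies in `𝔪`,
their intersection contains some `u` with `u(0) ≠ 0`. For `p ∈ Q₀` we get `u p ∈ ⟨f⟩`, and `u`
is invertible modulo `𝔪^(N+1)` through a truncated geometric series in `1 - u / u(0)`, so
`p ∈ ⟨f⟩ + 𝔪^(N+1)` and `Λ^0[p] = 0`.
-/

open Finsupp

section LinearFunctional

variable {σ R M : Type*} [CommSemiring R] [AddCommMonoid M] [Module R M]
  (ℓ : MvPolynomial σ R →ₗ[R] M)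

theorem forall_map_mul_eq_zero_iff_monomial (f : MvPolynomial σ R) :
    (∀ h, ℓ (h * f) = 0) ↔ ∀ β, ℓ (monomial β 1 * f) = 0 := by
  refine ⟨fun H β => H _, fun H h => ?_⟩
  induction h using MvPolynomial.induction_on' with
  | monomial β a =>
    rw [show monomial β a * f = a • (monomial β 1 * f) by
      rw [← smul_mul_assoc, smul_monomial, smul_eq_mul, mul_one], map_smul, H, smul_zero]
  | add p q hp hq => rw [add_mul, map_add, hp, hq, add_zero]

theorem forall_mem_span_range_map_eq_zero_iff {ι : Type*} [Fintype ι]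
    (f : ι → MvPolynomial σ R) :
    (∀ g ∈ Ideal.span (Set.range f), ℓ g = 0) ↔ ∀ i β, ℓ (monomial β 1 * f i) = 0 := by
  simp_rw [← forall_map_mul_eq_zero_iff_monomial]
  refine ⟨fun H i h => H _ (Ideal.mul_mem_left _ h (Ideal.subset_span ⟨i, rfl⟩)), ?_⟩
  rintro H g hg
  obtain ⟨c, rfl⟩ := Ideal.mem_span_range_iff_exists_fun.mp hg
  simp [map_sum, H]

theorem mem_idealOfVars_iff (p : MvPolynomial σ R) :
    p ∈ idealOfVars σ R ↔ constantCoeff p = 0 := by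
  rw [← pow_one (idealOfVars σ R), mem_pow_idealOfVars_iff']
  simp [degree_eq_zero_iff, constantCoeff_eq]

theorem monomial_mul_mem_pow_idealOfVars {k : ℕ} {β : σ →₀ ℕ} (hβ : k ≤ degree β)
    {f : MvPolynomial σ R} (hf : constantCoeff f = 0) :
    monomial β 1 * f ∈ idealOfVars σ R ^ (k + 1) := by
  have hβ' : monomial β (1 : R) ∈ idealOfVars σ R ^ k := by
    rw [mem_pow_idealOfVars_iff]
    intro x hx
    rwa [Finset.mem_singleton.mp (support_monomial_subset hx)]
  rw [pow_succ]
  exact Ideal.mul_mem_mul hβ' ((mem_idealOfVars_iff f).mpr hf)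

theorem forall_mem_span_range_map_eq_zero_iff_of_degree_lt {k : ℕ}
    (hℓ : ∀ g ∈ idealOfVars σ R ^ (k + 1), ℓ g = 0) {ι : Type*} [Fintype ι]
    {f : ι → MvPolynomial σ R} (hf : ∀ i, constantCoeff (f i) = 0) :
    (∀ g ∈ Ideal.span (Set.range f), ℓ g = 0) ↔
      ∀ i β, degree β < k → ℓ (monomial β 1 * f i) = 0 := by
  rw [forall_mem_span_range_map_eq_zero_iff]
  refine forall_congr' fun i => forall_congr' fun β => ⟨fun H _ => H, fun H => ?_⟩
  by_cases hβ : degree β < k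
  · exact H hβ
  · exact hℓ _ (monomial_mul_mem_pow_idealOfVars (not_lt.mp hβ) (hf i))

end LinearFunctional

theorem idealOfVars_eq_ker {σ R : Type*} [CommSemiring R] :
    idealOfVars σ R = RingHom.ker (constantCoeff (σ := σ) (R := R)) :=
  Ideal.ext mem_idealOfVars_iff

theorem isPrime_idealOfVars (σ R : Type*) [CommRing R] [IsDomain R] :
    (idealOfVars σ R).IsPrime := by
  rw [idealOfVars_eq_ker]
  exact RingHom.ker_isPrime _

section Field

variable {σ K M : Type*} [Field K] [AddCommMonoid M] [Module K M]
  (ℓ : MvPolynomial σ K →ₗ[K] M) {k : ℕ}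

theorem map_eq_zero_of_mul_mem (hℓ : ∀ g ∈ idealOfVars σ K ^ k, ℓ g = 0)
    {I : Ideal (MvPolynomial σ K)} (hI : ∀ g ∈ I, ℓ g = 0)
    {u p : MvPolynomial σ K} (hu : constantCoeff u ≠ 0) (hup : u * p ∈ I) : ℓ p = 0 := by
  set w := 1 - C (constantCoeff u)⁻¹ * u
  have hw : w ∈ idealOfVars σ K := by
    rw [mem_idealOfVars_iff]
    simp [w, inv_mul_cancel₀ hu]
  have hp : p = C (constantCoeff u)⁻¹ * (u * p) * ∑ j ∈ Finset.range k, w ^ j + w ^ k * p := by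
    linear_combination (-p) * mul_neg_geom_sum w k
  rw [hp, map_add, hI _ (I.mul_mem_right _ (I.mul_mem_left _ hup)),
    hℓ _ (Ideal.mul_mem_right _ _ (Ideal.pow_mem_pow hw k)), add_zero]

theorem forall_mem_iff_forall_mem_inf (hℓ : ∀ g ∈ idealOfVars σ K ^ k, ℓ g = 0)
    {Q : Ideal (MvPolynomial σ K)}
    {S : Finset (Ideal (MvPolynomial σ K))} (hS : ∀ P ∈ S, ¬ P.radical ≤ idealOfVars σ K) :
    (∀ g ∈ Q, ℓ g = 0) ↔ ∀ g ∈ S.inf id ⊓ Q, ℓ g = 0 := by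
  refine ⟨fun H g hg => H g (Submodule.mem_inf.mp hg).2, fun H p hp => ?_⟩
  have hprime := isPrime_idealOfVars σ K
  obtain ⟨u, huS, hu⟩ : ∃ u ∈ S.inf id, u ∉ idealOfVars σ K := by
    rw [← SetLike.not_le_iff_exists, hprime.inf_le']
    rintro ⟨P, hP, hle⟩
    exact hS P hP (hprime.radical_le_iff.mpr hle)
  rw [mem_idealOfVars_iff] at hu
  exact map_eq_zero_of_mul_mem ℓ hℓ H hu
    (Submodule.mem_inf.mpr ⟨Ideal.mul_mem_right _ _ huS, Ideal.mul_mem_left _ _ hp⟩)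

end Field

section DifferentialOperators

variable {n : ℕ}

theorem multideg_eq_degree (α : Fin n →₀ ℕ) : multideg α = degree α := rfl

theorem prod_choose_eq_zero_of_lt {α γ : Fin n →₀ ℕ} (h : γ < α) :
    ∏ i, (γ i).choose (α i) = 0 := by
  obtain ⟨i, hi⟩ := (Finsupp.lt_def.mp h).2
  exact Finset.prod_eq_zero (Finset.mem_univ i) (Nat.choose_eq_zero_of_lt hi)

theorem constantCoeff_nderiv (α : Fin n →₀ ℕ) (g : MvPolynomial (Fin n) ℝ) :
    constantCoeff (nderiv α g) = coeff α g := by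
  rw [nderiv, map_sum]
  refine (Finset.sum_eq_single α (fun γ _ hγα => ?_) fun hα => ?_).trans (by simp)
  · rw [constantCoeff_monomial]
    split_ifs with hle
    · rw [prod_choose_eq_zero_of_lt (lt_of_le_of_ne (tsub_eq_zero_iff_le.mp hle) hγα)]
      simp
    · rfl
  · simp [MvPolynomial.notMem_support_iff.mp hα]

noncomputable def applyAtZeroₗ (Λ : (Fin n →₀ ℕ) →₀ ℝ) : MvPolynomial (Fin n) ℝ →ₗ[ℝ] ℝ :=
  Λ.sum fun α c => c • lcoeff ℝ α

theorem applyAtZeroₗ_apply (Λ : (Fin n →₀ ℕ) →₀ ℝ) (g : MvPolynomial (Fin n) ℝ) :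
    applyAtZeroₗ Λ g = applyAt 0 Λ g := by
  simp [applyAtZeroₗ, applyAt, applyAtL, linearCombination_apply, constantCoeff_nderiv,
    Finsupp.sum]

theorem applyAtZeroₗ_eq_zero_of_mem_pow {N : ℕ} {Λ : (Fin n →₀ ℕ) →₀ ℝ}
    (hdeg : ∀ α ∈ Λ.support, multideg α ≤ N) {g : MvPolynomial (Fin n) ℝ}
    (hg : g ∈ idealOfVars (Fin n) ℝ ^ (N + 1)) : applyAtZeroₗ Λ g = 0 := by
  rw [mem_pow_idealOfVars_iff'] at hg
  simp only [applyAtZeroₗ, Finsupp.sum, LinearMap.coe_sum, LinearMap.coe_smul, Finset.sum_apply,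
    Pi.smul_apply, lcoeff_apply, smul_eq_mul]
  exact Finset.sum_eq_zero fun α hα => by rw [hg α (Nat.lt_succ_of_le (hdeg α hα)), mul_zero]

theorem maxIdealAt_zero : maxIdealAt (0 : Fin n → ℝ) = idealOfVars (Fin n) ℝ := by
  simp [maxIdealAt]

theorem mem_dualSpace_iff {ζ : Fin n → ℝ} {Q : Ideal (MvPolynomial (Fin n) ℝ)}
    {Λ : (Fin n →₀ ℕ) →₀ ℝ} : Λ ∈ dualSpace ζ Q ↔ ∀ p ∈ Q, applyAt ζ Λ p = 0 := by
  simp [dualSpace, Submodule.mem_iInf, applyAt]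

end DifferentialOperators

theorem stmt8_general {n s : ℕ} (f : Fin s → MvPolynomial (Fin n) ℝ)
    (Q : Ideal (MvPolynomial (Fin n) ℝ))
    (hQ : IsPrimaryComponentAt (0 : Fin n → ℝ) (Ideal.span (Set.range f)) Q)
    (hf0 : ∀ i, MvPolynomial.eval (0 : Fin n → ℝ) (f i) = 0)
    (N : ℕ)
    (Λ : (Fin n →₀ ℕ) →₀ ℝ) (hdeg : ∀ α ∈ Λ.support, multideg α ≤ N) :
    ((∀ g ∈ Ideal.span (Set.range f), applyAt (0 : Fin n → ℝ) Λ g = 0) ↔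
      (∀ (i : Fin s) (β : Fin n →₀ ℕ), multideg β < N →
        applyAt (0 : Fin n → ℝ) Λ (MvPolynomial.monomial β (1 : ℝ) * f i) = 0)) ∧
    (Λ ∈ dualSpace (0 : Fin n → ℝ) Q ↔
      (∀ (i : Fin s) (β : Fin n →₀ ℕ), multideg β < N →
        applyAt (0 : Fin n → ℝ) Λ (MvPolynomial.monomial β (1 : ℝ) * f i) = 0)) := by
  obtain ⟨-, -, S, hS, hI⟩ := hQ
  rw [maxIdealAt_zero] at hS
  have hΛ : ∀ g ∈ idealOfVars (Fin n) ℝ ^ (N + 1), applyAtZeroₗ Λ g = 0 :=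
    fun _ => applyAtZeroₗ_eq_zero_of_mem_pow hdeg
  have hf : ∀ i, constantCoeff (f i) = 0 := by simpa [eval_zero] using hf0
  have hspan := forall_mem_span_range_map_eq_zero_iff_of_degree_lt _ hΛ hf
  have hdual := forall_mem_iff_forall_mem_inf _ hΛ (Q := Q) fun P hP => (hS P hP).2
  rw [← hI] at hdual
  simp only [applyAtZeroₗ_apply, ← multideg_eq_degree] at hspan hdual
  rw [mem_dualSpace_iff, hdual]
  exact ⟨hspan, hspan⟩

/-- Macaulay's dialytic criterion: assume `ζ = 0`, so all `f_i`
vanish at `0`, and let `N` be the nilindex of `Q₀`. A polynomial differential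
operator `Λ` of degree at most `N` vanishes on the whole ideal `⟨f₁,…,f_s⟩`
(equivalently, `Λ ∈ 𝒟₀`) iff `Λ^0[x^β f_i] = 0` for all `i` and all monomials
`x^β` with `|β| ≤ N − 1`. -/
theorem stmt8 {n s : ℕ} (f : Fin s → MvPolynomial (Fin n) ℝ)
    (Q : Ideal (MvPolynomial (Fin n) ℝ))
    (hQ : IsPrimaryComponentAt (0 : Fin n → ℝ) (Ideal.span (Set.range f)) Q)
    (hf0 : ∀ i, MvPolynomial.eval (0 : Fin n → ℝ) (f i) = 0)
    (N : ℕ) (hN : ¬ (maxIdealAt (0 : Fin n → ℝ)) ^ N ≤ Q)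
    (hN' : (maxIdealAt (0 : Fin n → ℝ)) ^ (N + 1) ≤ Q)
    (Λ : (Fin n →₀ ℕ) →₀ ℝ) (hdeg : ∀ α ∈ Λ.support, multideg α ≤ N) :
    ((∀ g ∈ Ideal.span (Set.range f), applyAt (0 : Fin n → ℝ) Λ g = 0) ↔
      (∀ (i : Fin s) (β : Fin n →₀ ℕ), multideg β < N →
        applyAt (0 : Fin n → ℝ) Λ (MvPolynomial.monomial β (1 : ℝ) * f i) = 0)) ∧
    (Λ ∈ dualSpace (0 : Fin n → ℝ) Q ↔
      (∀ (i : Fin s) (β : Fin n →₀ ℕ), multideg β < N →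
        applyAt (0 : Fin n → ℝ) Λ (MvPolynomial.monomial β (1 : ℝ) * f i) = 0)) :=
  stmt8_general f Q hQ hf0 N Λ hdeg
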